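/- For every finite antichain 𝓕 of finite sets of atoms (no member of 𝓕 is a subset of another distinct member), there exists a logic program P whose family of stable models is exactly 𝓕. -/
import Mathlib


/-- A normal program clause: head ← pos, not(neg). -/
structure Clause where
  head : ℕ
  pos : Finset ℕ
  neg : Finset ℕ
deriving DecidableEq

/-- N is closed under (is a model of) the Gelfond–Lifschitz reduct of P with respect to M. -/
def ReductClosed (P : Finset Clause) (M N : Set ℕ) : Prop :=
  ∀ c ∈ P, (∀ a ∈ c.neg, a ∉ M) → (↑c.pos : Set ℕ) ⊆ N → c.head ∈ N

/-- M is a stable model of P: M is the least model of the reduct P^M. -/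
def IsStableModel (P : Finset Clause) (M : Set ℕ) : Prop :=
  ReductClosed P M M ∧ ∀ N : Set ℕ, ReductClosed P M N → M ⊆ N

/-- Every finite antichain of finite sets is the family of stable models of some
normal logic program. -/
theorem antichain_representable (F : Finset (Finset ℕ))
    (hanti : ∀ A ∈ F, ∀ B ∈ F, A ⊆ B → A = B) :
    ∃ P : Finset Clause, ∀ M : Set ℕ, IsStableModel P M ↔ ∃ A ∈ F, M = ↑A := by
  classical
  by_cases hF : F = ∅
  · -- paradoxical program with no stable model
    refine ⟨{⟨0, ∅, {0}⟩}, ?_⟩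
    intro M
    subst hF
    simp only [Finset.notMem_empty, false_and, exists_false, iff_false]
    rintro ⟨h1, h2⟩
    by_cases h0 : (0 : ℕ) ∈ M
    · -- show M ⊆ ∅
      have : M ⊆ (∅ : Set ℕ) := by
        apply h2
        intro c hc hneg _
        simp only [Finset.mem_singleton] at hc
        subst hc
        exact absurd h0 (hneg 0 (by simp))
      exact this h0
    · exact h0 (h1 ⟨0, ∅, {0}⟩ (by simp) (by simpa using h0) (by simp))
  · set U : Finset ℕ := F.sup id with hU
    have hsubU : ∀ A ∈ F, A ⊆ U := fun A hA => Finset.le_sup (f := id) hA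
    set P : Finset Clause :=
      F.biUnion (fun A => A.image (fun a => ⟨a, ∅, U \ A⟩)) with hP
    have memP : ∀ c, c ∈ P ↔ ∃ A ∈ F, ∃ a ∈ A, c = ⟨a, ∅, U \ A⟩ := by
      intro c
      simp only [hP, Finset.mem_biUnion, Finset.mem_image]
      constructor
      · rintro ⟨A, hA, a, ha, rfl⟩; exact ⟨A, hA, a, ha, rfl⟩
      · rintro ⟨A, hA, a, ha, rfl⟩; exact ⟨A, hA, a, ha, rfl⟩
    refine ⟨P, fun M => ⟨?_, ?_⟩⟩
    · rintro ⟨hcl, hmin⟩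
      set S : Finset (Finset ℕ) := F.filter (fun A => ∀ x ∈ U \ A, x ∉ M) with hS
      set L : Set ℕ := ↑(S.biUnion id) with hL
      -- L is a model of the reduct
      have hLcl : ReductClosed P M L := by
        intro c hc hneg _
        obtain ⟨A, hA, a, ha, rfl⟩ := (memP c).1 hc
        have hAS : A ∈ S := Finset.mem_filter.2 ⟨hA, hneg⟩
        simp only [hL, Finset.coe_biUnion, Set.mem_iUnion]
        exact ⟨A, hAS, ha⟩
      have hML : M ⊆ L := hmin L hLcl
      have hLM : L ⊆ M := by
        intro x hx
        simp only [hL, Finset.coe_biUnion, Set.mem_iUnion, id] at hx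
        obtain ⟨A, hAS, hxA⟩ := hx
        obtain ⟨hAF, hnegA⟩ := Finset.mem_filter.1 hAS
        exact hcl ⟨x, ∅, U \ A⟩ ((memP _).2 ⟨A, hAF, x, hxA, rfl⟩) hnegA (by simp)
      have hSne : S.Nonempty := by
        by_contra hSe
        rw [Finset.not_nonempty_iff_eq_empty] at hSe
        have hMe : M = ∅ := by
          apply Set.eq_empty_iff_forall_notMem.2
          intro x hx
          have := hML hx
          simp [hL, hSe] at this
        obtain ⟨A, hA⟩ := Finset.nonempty_iff_ne_empty.2 hF
        have : A ∈ S := Finset.mem_filter.2 ⟨hA, by simp [hMe]⟩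
        simp [hSe] at this
      obtain ⟨A, hAS⟩ := hSne
      obtain ⟨hAF, hnegA⟩ := Finset.mem_filter.1 hAS
      refine ⟨A, hAF, ?_⟩
      apply Set.Subset.antisymm
      · -- M ⊆ A
        intro x hx
        have hxL := hML hx
        simp only [hL, Finset.coe_biUnion, Set.mem_iUnion, id] at hxL
        obtain ⟨B, hBS, hxB⟩ := hxL
        have hBF := (Finset.mem_filter.1 hBS).1
        have hxU : x ∈ U := hsubU B hBF hxB
        by_contra hxA
        exact hnegA x (Finset.mem_sdiff.2 ⟨hxU, fun h => hxA h⟩) hx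
      · -- A ⊆ M
        intro x hx
        simp only [Finset.mem_coe] at hx
        exact hcl ⟨x, ∅, U \ A⟩ ((memP _).2 ⟨A, hAF, x, hx, rfl⟩) hnegA (by simp)
    · rintro ⟨A, hAF, rfl⟩
      constructor
      · intro c hc hneg _
        obtain ⟨B, hBF, b, hb, rfl⟩ := (memP c).1 hc
        have hAB : A ⊆ B := by
          intro x hxA
          by_contra hxB
          exact hneg x (Finset.mem_sdiff.2 ⟨hsubU A hAF hxA, hxB⟩) hxA
        have := hanti A hAF B hBF hAB
        subst this
        exact hb
      · intro N hN x hx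
        simp only [Finset.mem_coe] at hx
        refine hN ⟨x, ∅, U \ A⟩ ((memP _).2 ⟨A, hAF, x, hx, rfl⟩) ?_ (by simp)
        intro a ha
        exact fun h => (Finset.mem_sdiff.1 ha).2 h
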